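/- arXiv:2201.03486 — 4 statements merged into one kernel-verified Lean document; each statement's English description precedes it below -/
import Mathlib

section
/- Let $(I_1,\ldots,I_K)$ be a uniformly random permutation of $\{1,\ldots,K\}$, let $A_1B_1,\ldots,A_KB_K$ be fixed real matrices with $C = \sum_j A_jB_j$, and for $1 \le m \le K$ let $C_m = \sum_{k=1}^m A_{I_k}B_{I_k}$. Then for every real $\beta$, the expected squared Frobenius error satisfies $\mathbb{E}\|C - \beta C_m\|_F^2 = \|C\|_F^2(1 - 2\beta\frac{m}{K}) + \beta^2\big(M_1\frac{m}{K} + 2M_2\frac{m(m-1)}{K(K-1)}\big)$, where $M_1 = \sum_{j=1}^K \|A_jB_j\|_F^2$ and $M_2 = \sum_{j < j'} \mathrm{Tr}((A_jB_j)^T(A_{j'}B_{j'}))$. -/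
open Finset

/-!
Expanding the bilinear form, `‖C - β C_m‖²` is a combination of `⟪C, M_{σ k}⟫`, `‖M_{σ k}‖²` and
`⟪M_{σ k}, M_{σ k'}⟫` for `k ≠ k'` among the first `m` positions. Under a uniform permutation `σ`,
a fixed position goes to a uniform index and a fixed pair of distinct positions to a uniform pair
of distinct indices, since `Perm α` acts transitively on `α` and on `Fin 2 ↪ α`. Averaging over a
transitive action is averaging over the set acted on, so the three kinds of terms average to
`1/K` resp. `1/(K(K-1))` times the corresponding full sums.
-/

theorem MulAction.inv_card_mul_sum_smul {G X 𝕜 : Type*} [Group G] [Fintype G] [MulAction G X]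
    [Fintype X] [MulAction.IsPretransitive G X] [Field 𝕜] [CharZero 𝕜] (f : X → 𝕜) (x : X) :
    (Fintype.card G : 𝕜)⁻¹ * ∑ g : G, f (g • x) = (Fintype.card X : 𝕜)⁻¹ * ∑ y, f y := by
  have orbit_sum_const (y : X) : ∑ g : G, f (g • y) = ∑ g : G, f (g • x) := by
    obtain ⟨h, rfl⟩ := MulAction.exists_smul_eq G x y
    simpa only [Equiv.coe_mulRight, mul_smul] using
      Equiv.sum_comp (Equiv.mulRight h) (fun g => f (g • x))
  have double_count : (Fintype.card X : 𝕜) * ∑ g : G, f (g • x) =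
      (Fintype.card G : 𝕜) * ∑ y, f y := by
    calc (Fintype.card X : 𝕜) * ∑ g : G, f (g • x) = ∑ y : X, ∑ g : G, f (g • y) := by
          simp only [orbit_sum_const, sum_const, card_univ, nsmul_eq_mul]
      _ = ∑ g : G, ∑ y : X, f (g • y) := sum_comm
      _ = ∑ _g : G, ∑ y : X, f y := sum_congr rfl fun g _ => Equiv.sum_comp (MulAction.toPerm g) f
      _ = (Fintype.card G : 𝕜) * ∑ y, f y := by rw [sum_const, card_univ, nsmul_eq_mul]
  have : Nonempty X := ⟨x⟩
  have hG : (Fintype.card G : 𝕜) ≠ 0 := Nat.cast_ne_zero.mpr Fintype.card_ne_zero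
  have hX : (Fintype.card X : 𝕜) ≠ 0 := Nat.cast_ne_zero.mpr Fintype.card_ne_zero
  field_simp
  linear_combination double_count

theorem Function.Embedding.sum_fin_two_eq_sum_offDiag {α β : Type*} [Fintype α] [DecidableEq α]
    [AddCommMonoid β] (g : α → α → β) :
    ∑ e : Fin 2 ↪ α, g (e 0) (e 1) = ∑ p ∈ univ.offDiag, g p.1 p.2 := by
  rw [sum_subtype (p := (· ∈ {(a, b) : α × α | a ≠ b})) _ (by simp)]
  exact Fintype.sum_equiv twoEmbeddingEquiv _ _ fun _ => rfl

theorem Finset.sum_offDiag_eq_two_mul_sum_lt {ι R : Type*} [Fintype ι] [LinearOrder ι]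
    [Semiring R] (g : ι → ι → R) (hg : ∀ i j, g i j = g j i) :
    ∑ p ∈ univ.offDiag, g p.1 p.2 = 2 * ∑ i, ∑ j, if i < j then g i j else 0 := by
  have split (i j : ι) : (if i ≠ j then g i j else 0) =
      (if i < j then g i j else 0) + (if j < i then g j i else 0) := by
    rcases lt_trichotomy i j with h | rfl | h
    · simp [h.ne, h, h.not_gt]
    · simp
    · simp [h.ne', h, h.not_gt, hg i j]
  rw [show univ.offDiag = univ.filter fun p : ι × ι => p.1 ≠ p.2 by ext; simp, sum_filter,
    Fintype.sum_prod_type]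
  simp only [split, sum_add_distrib]
  rw [sum_comm (f := fun i j => if j < i then g j i else 0), two_mul]

theorem LinearMap.map_sum_sum_self {R M N ι : Type*} [CommSemiring R] [AddCommMonoid M]
    [AddCommMonoid N] [Module R M] [Module R N] [DecidableEq ι] (B : M →ₗ[R] M →ₗ[R] N)
    (s : Finset ι) (v : ι → M) :
    B (∑ i ∈ s, v i) (∑ i ∈ s, v i) =
      ∑ i ∈ s, B (v i) (v i) + ∑ p ∈ s.offDiag, B (v p.1) (v p.2) := by
  rw [← sum_diag s (fun p => B (v p.1) (v p.2)), ← sum_union (disjoint_diag_offDiag s),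
    diag_union_offDiag, sum_product' s s (fun i j => B (v i) (v j))]
  simp only [map_sum, LinearMap.sum_apply]
  exact sum_comm

def Matrix.frobeniusForm (m n R : Type*) [Fintype m] [Fintype n] [CommSemiring R] :
    Matrix m n R →ₗ[R] Matrix m n R →ₗ[R] R :=
  LinearMap.mk₂ R (fun X Y => ∑ a, ∑ b, X a b * Y a b)
    (fun X X' Y => by simp only [Matrix.add_apply, add_mul, sum_add_distrib])
    (fun c X Y => by simp only [Matrix.smul_apply, smul_eq_mul, mul_sum, mul_assoc])
    (fun X Y Y' => by simp only [Matrix.add_apply, mul_add, sum_add_distrib])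
    (fun c X Y => by simp only [Matrix.smul_apply, smul_eq_mul, mul_sum, mul_left_comm])

theorem Matrix.frobeniusForm_comm {m n R : Type*} [Fintype m] [Fintype n] [CommSemiring R]
    (X Y : Matrix m n R) : frobeniusForm m n R X Y = frobeniusForm m n R Y X :=
  sum_congr rfl fun _ _ => sum_congr rfl fun _ _ => mul_comm _ _

namespace Equiv.Perm

variable {α 𝕜 V : Type*} [Fintype α] [DecidableEq α] [Field 𝕜] [CharZero 𝕜]

theorem inv_factorial_mul_sum_apply (f : α → 𝕜) (a : α) :
    ((Fintype.card α).factorial : 𝕜)⁻¹ * ∑ σ : Perm α, f (σ a) =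
      (Fintype.card α : 𝕜)⁻¹ * ∑ x, f x := by
  rw [← Fintype.card_perm]
  exact MulAction.inv_card_mul_sum_smul f a

theorem inv_factorial_mul_sum_apply_apply (g : α → α → 𝕜) {a b : α} (hab : a ≠ b) :
    ((Fintype.card α).factorial : 𝕜)⁻¹ * ∑ σ : Perm α, g (σ a) (σ b) =
      ((Fintype.card α : 𝕜) * (Fintype.card α - 1))⁻¹ * ∑ p ∈ univ.offDiag, g p.1 p.2 := by
  have : MulAction.IsPretransitive (Perm α) (Fin 2 ↪ α) := isMultiplyPretransitive α 2
  have := MulAction.inv_card_mul_sum_smul (G := Perm α) (fun e : Fin 2 ↪ α => g (e 0) (e 1))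
    (Function.Embedding.embFinTwo hab)
  rw [Fintype.card_perm, Fintype.card_embedding_eq, Fintype.card_fin, Nat.cast_descFactorial_two,
    Function.Embedding.sum_fin_two_eq_sum_offDiag] at this
  simp only [Function.Embedding.smul_apply, Function.Embedding.embFinTwo_apply_zero,
    Function.Embedding.embFinTwo_apply_one] at this
  exact this

theorem inv_factorial_mul_sum_sum_apply (f : α → 𝕜) (T : Finset α) :
    ((Fintype.card α).factorial : 𝕜)⁻¹ * ∑ σ : Perm α, ∑ k ∈ T, f (σ k) =
      #T * ((Fintype.card α : 𝕜)⁻¹ * ∑ x, f x) := by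
  rw [sum_comm, mul_sum, sum_congr rfl fun k _ => inv_factorial_mul_sum_apply f k, sum_const,
    nsmul_eq_mul]

theorem inv_factorial_mul_sum_sum_offDiag_apply (g : α → α → 𝕜) (T : Finset α) :
    ((Fintype.card α).factorial : 𝕜)⁻¹ * ∑ σ : Perm α, ∑ p ∈ T.offDiag, g (σ p.1) (σ p.2) =
      #T * (#T - 1) * (((Fintype.card α : 𝕜) * (Fintype.card α - 1))⁻¹ *
        ∑ p ∈ univ.offDiag, g p.1 p.2) := by
  rw [sum_comm, mul_sum, sum_congr rfl fun p hp =>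
      inv_factorial_mul_sum_apply_apply g (mem_offDiag.1 hp).2.2,
    sum_const, nsmul_eq_mul, offDiag_card, Nat.cast_sub (Nat.le_mul_self _)]
  push_cast
  ring

theorem inv_factorial_mul_sum_bilin_sub_smul_sum [AddCommGroup V] [Module 𝕜 V]
    (B : V →ₗ[𝕜] V →ₗ[𝕜] 𝕜) (v : α → V) (T : Finset α) (β : 𝕜) :
    ((Fintype.card α).factorial : 𝕜)⁻¹ * ∑ σ : Perm α,
        B (∑ j, v j - β • ∑ k ∈ T, v (σ k)) (∑ j, v j - β • ∑ k ∈ T, v (σ k)) =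
      B (∑ j, v j) (∑ j, v j) * (1 - 2 * β * (#T / Fintype.card α)) +
        β ^ 2 * ((∑ j, B (v j) (v j)) * (#T / Fintype.card α) +
          (∑ p ∈ univ.offDiag, B (v p.1) (v p.2)) *
            (#T * (#T - 1) / (Fintype.card α * (Fintype.card α - 1)))) := by
  set C := ∑ j, v j
  have expand (σ : Perm α) :
      B (C - β • ∑ k ∈ T, v (σ k)) (C - β • ∑ k ∈ T, v (σ k)) =
        B C C - β * (∑ k ∈ T, B C (v (σ k)) + ∑ k ∈ T, B (v (σ k)) C) +
          β ^ 2 * (∑ k ∈ T, B (v (σ k)) (v (σ k)) +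
            ∑ p ∈ T.offDiag, B (v (σ p.1)) (v (σ p.2))) := by
    simp only [map_sub, map_smul, LinearMap.sub_apply, LinearMap.smul_apply]
    rw [B.map_sum_sum_self T (fun k => v (σ k))]
    simp only [map_sum, LinearMap.sum_apply, smul_eq_mul]
    ring
  have cross_left := inv_factorial_mul_sum_sum_apply (fun j => B C (v j)) T
  have cross_right := inv_factorial_mul_sum_sum_apply (fun j => B (v j) C) T
  have diag := inv_factorial_mul_sum_sum_apply (fun j => B (v j) (v j)) T
  have offDiag := inv_factorial_mul_sum_sum_offDiag_apply (fun i j => B (v i) (v j)) T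
  rw [← map_sum] at cross_left
  rw [← LinearMap.sum_apply, ← map_sum] at cross_right
  have hfac : ((Fintype.card α).factorial : 𝕜)⁻¹ * (Fintype.card α).factorial = 1 :=
    inv_mul_cancel₀ (Nat.cast_ne_zero.mpr (Nat.factorial_ne_zero _))
  simp only [sum_congr rfl fun σ _ => expand σ, sum_add_distrib, sum_sub_distrib, ← mul_sum,
    sum_const, card_univ, Fintype.card_perm, nsmul_eq_mul]
  linear_combination B C C * hfac - β * (cross_left + cross_right) + β ^ 2 * (diag + offDiag)

end Equiv.Perm

theorem stmt4_general (K m p q : ℕ) (hmK : m ≤ K)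
    (M : Fin K → Matrix (Fin p) (Fin q) ℝ) (β : ℝ) :
    let inner : Matrix (Fin p) (Fin q) ℝ → Matrix (Fin p) (Fin q) ℝ → ℝ :=
      fun X Y => ∑ a, ∑ b, X a b * Y a b
    let C : Matrix (Fin p) (Fin q) ℝ := ∑ j, M j
    let M1 : ℝ := ∑ j, inner (M j) (M j)
    let M2 : ℝ := ∑ j : Fin K, ∑ j' : Fin K, if j < j' then inner (M j) (M j') else 0
    let Cm : Equiv.Perm (Fin K) → Matrix (Fin p) (Fin q) ℝ :=
      fun σ => ∑ k ∈ Finset.univ.filter (fun k : Fin K => (k : ℕ) < m), M (σ k)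
    (Nat.factorial K : ℝ)⁻¹ *
      ∑ σ : Equiv.Perm (Fin K), inner (C - β • Cm σ) (C - β • Cm σ)
    = inner C C * (1 - 2 * β * ((m : ℝ) / (K : ℝ)))
      + β ^ 2 * (M1 * ((m : ℝ) / (K : ℝ))
          + 2 * M2 * (((m : ℝ) * ((m : ℝ) - 1)) / ((K : ℝ) * ((K : ℝ) - 1)))) := by
  intro inner C M1 M2 Cm
  have card_prefix : #(univ.filter fun k : Fin K => (k : ℕ) < m) = m := by
    rw [Fin.card_filter_val_lt, min_eq_right hmK]
  have key := Equiv.Perm.inv_factorial_mul_sum_bilin_sub_smul_sum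
    (Matrix.frobeniusForm (Fin p) (Fin q) ℝ) M (univ.filter fun k : Fin K => (k : ℕ) < m) β
  rw [Fintype.card_fin, card_prefix, sum_offDiag_eq_two_mul_sum_lt _
    fun i j => Matrix.frobeniusForm_comm (M i) (M j)] at key
  exact key

/-- Expansion of the expected squared Frobenius error of the scaled partial sum
under a uniformly random permutation:
`E‖C - β C_m‖_F² = ‖C‖_F²(1 - 2β m/K) + β²(M₁ m/K + 2 M₂ m(m-1)/(K(K-1)))`. -/
theorem stmt4 (K m p q : ℕ) (hK : 2 ≤ K) (hm : 1 ≤ m) (hmK : m ≤ K)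
    (M : Fin K → Matrix (Fin p) (Fin q) ℝ) (β : ℝ) :
    let inner : Matrix (Fin p) (Fin q) ℝ → Matrix (Fin p) (Fin q) ℝ → ℝ :=
      fun X Y => ∑ a, ∑ b, X a b * Y a b
    let C : Matrix (Fin p) (Fin q) ℝ := ∑ j, M j
    let M1 : ℝ := ∑ j, inner (M j) (M j)
    let M2 : ℝ := ∑ j : Fin K, ∑ j' : Fin K, if j < j' then inner (M j) (M j') else 0
    let Cm : Equiv.Perm (Fin K) → Matrix (Fin p) (Fin q) ℝ :=
      fun σ => ∑ k ∈ Finset.univ.filter (fun k : Fin K => (k : ℕ) < m), M (σ k)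
    (Nat.factorial K : ℝ)⁻¹ *
      ∑ σ : Equiv.Perm (Fin K), inner (C - β • Cm σ) (C - β • Cm σ)
    = inner C C * (1 - 2 * β * ((m : ℝ) / (K : ℝ)))
      + β ^ 2 * (M1 * ((m : ℝ) / (K : ℝ))
          + 2 * M2 * (((m : ℝ) * ((m : ℝ) - 1)) / ((K : ℝ) * ((K : ℝ) - 1)))) :=
  stmt4_general K m p q hmK M β
end

section
/- In the setting above, the minimizer over $\beta \in \mathbb{R}$ of $\mathbb{E}\|C - \beta C_m\|_F^2$, where $C = \sum_{k=1}^K \alpha_k P_k$ and $C_m = \sum_{k=1}^K \alpha_k P_k \mathbf{1}_{m_k>0}$, is $\beta^* = \frac{\sum_i \tilde M_i \gamma_i + \sum_{i<j}\tilde M_{i,j}(\gamma_i + \gamma_j)}{\sum_i \tilde M_i \gamma_i + 2\sum_{i<j}\tilde M_{i,j}\gamma_{i,j}}$, provided the denominator is positive, where $\tilde M_i = \alpha_i^2\|P_i\|_F^2$, $\tilde M_{i,j} = \alpha_i\alpha_j\mathrm{Tr}(P_i^T P_j)$, $\gamma_i = 1 - \binom{N-n_i}{m}/\binom{N}{m}$,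 and $\gamma_{i,j} = \big(\binom{N}{m}-\binom{N-n_i}{m}-\binom{N-n_j}{m}+\binom{N-n_i-n_j}{m}\big)/\binom{N}{m}$. -/
open Finset

lemma hsplit {K : ℕ} (F : Fin K → Fin K → ℝ) :
    ∑ i, ∑ j, F i j = (∑ i, F i i)
      + ∑ i : Fin K, ∑ j : Fin K, (if i < j then F i j + F j i else 0) := by
  have h : ∑ i, ∑ j, F i j
      = (∑ i : Fin K, ∑ j : Fin K, if i = j then F i j else 0)
      + ((∑ i : Fin K, ∑ j : Fin K, if i < j then F i j else 0)
      + (∑ i : Fin K, ∑ j : Fin K, if j < i then F i j else 0)) := by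
    simp only [← Finset.sum_add_distrib]
    refine Finset.sum_congr rfl fun i _ => Finset.sum_congr rfl fun j _ => ?_
    rcases lt_trichotomy i j with h|h|h
    · simp [h, h.ne, not_lt_of_gt h]
    · simp [h]
    · simp [h, h.ne', not_lt_of_gt h]
  have hdiag : (∑ i : Fin K, ∑ j : Fin K, if i = j then F i j else 0) = ∑ i, F i i := by
    simp [Finset.sum_ite_eq]
  have hswap : (∑ i : Fin K, ∑ j : Fin K, if j < i then F i j else 0)
      = ∑ i : Fin K, ∑ j : Fin K, if i < j then F j i else 0 := by
    exact Finset.sum_comm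
  rw [h, hdiag, hswap]
  congr 1
  rw [← Finset.sum_add_distrib]
  refine Finset.sum_congr rfl fun i _ => ?_
  rw [← Finset.sum_add_distrib]
  refine Finset.sum_congr rfl fun j _ => ?_
  split <;> ring

lemma avoid_card {N : ℕ} (m : ℕ) (T : Finset (Fin N)) :
    ((Finset.powersetCard m (Finset.univ : Finset (Fin N))).filter
      (fun s => ∀ w ∈ s, w ∉ T)).card = (N - T.card).choose m := by
  have h : (Finset.powersetCard m (Finset.univ : Finset (Fin N))).filter
      (fun s => ∀ w ∈ s, w ∉ T) = Finset.powersetCard m Tᶜ := by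
    ext s
    simp only [Finset.mem_filter, Finset.mem_powersetCard, Finset.subset_iff,
      Finset.mem_compl, Finset.mem_univ, true_implies]
    tauto
  rw [h, Finset.card_powersetCard, Finset.card_compl, Fintype.card_fin]

lemma swap3 {S I J : Type*} (s : Finset S) (u : Finset I) (v : Finset J) (F : S → I → J → ℝ) :
    ∑ x ∈ s, ∑ i ∈ u, ∑ j ∈ v, F x i j = ∑ i ∈ u, ∑ j ∈ v, ∑ x ∈ s, F x i j := by
  calc ∑ x ∈ s, ∑ i ∈ u, ∑ j ∈ v, F x i j
      = ∑ i ∈ u, ∑ x ∈ s, ∑ j ∈ v, F x i j := Finset.sum_comm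
    _ = ∑ i ∈ u, ∑ j ∈ v, ∑ x ∈ s, F x i j :=
        Finset.sum_congr rfl fun i _ => Finset.sum_comm

lemma swap4 {A B I J : Type*} (sa : Finset A) (sb : Finset B) (si : Finset I) (sj : Finset J)
    (F : A → B → I → J → ℝ) :
    ∑ a ∈ sa, ∑ b ∈ sb, ∑ i ∈ si, ∑ j ∈ sj, F a b i j
      = ∑ i ∈ si, ∑ j ∈ sj, ∑ a ∈ sa, ∑ b ∈ sb, F a b i j := by
  calc ∑ a ∈ sa, ∑ b ∈ sb, ∑ i ∈ si, ∑ j ∈ sj, F a b i j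
      = ∑ a ∈ sa, ∑ i ∈ si, ∑ j ∈ sj, ∑ b ∈ sb, F a b i j :=
        Finset.sum_congr rfl fun a _ => swap3 _ _ _ _
    _ = ∑ i ∈ si, ∑ j ∈ sj, ∑ a ∈ sa, ∑ b ∈ sb, F a b i j := swap3 _ _ _ _

/-- The optimal scaling
`β* = (∑ᵢ M̃ᵢγᵢ + ∑_{i<j} M̃ᵢⱼ(γᵢ+γⱼ)) / (∑ᵢ M̃ᵢγᵢ + 2∑_{i<j} M̃ᵢⱼγᵢⱼ)`
minimizes `E‖C - β C_m‖_F²` over `β ∈ ℝ`, provided the denominator is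
positive, where the expectation is over a uniformly random `m`-subset of `N`
workers partitioned into groups (fibers of `g`, group `k` of size `n k`),
`C = ∑_k α_k P_k` and `C_m = ∑_k α_k P_k 1_{m_k>0}`. -/
theorem stmt9 (N K m p r : ℕ) (hN : 1 ≤ N) (hm : 1 ≤ m) (hmN : m ≤ N)
    (g : Fin N → Fin K) (n : Fin K → ℕ) (hn : ∀ k, 1 ≤ n k)
    (hcard : ∀ k, (Finset.univ.filter (fun w => g w = k)).card = n k)
    (hsum : ∑ k, n k = N)
    (α : Fin K → ℝ) (P : Fin K → Matrix (Fin p) (Fin r) ℝ) :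
    let inner : Matrix (Fin p) (Fin r) ℝ → Matrix (Fin p) (Fin r) ℝ → ℝ :=
      fun X Y => ∑ a, ∑ b, X a b * Y a b
    let Mt : Fin K → ℝ := fun i => α i ^ 2 * inner (P i) (P i)
    let Mtt : Fin K → Fin K → ℝ := fun i j => α i * α j * inner (P i) (P j)
    let γ : Fin K → ℝ := fun i => 1 - ((N - n i).choose m : ℝ) / (N.choose m : ℝ)
    let γ2 : Fin K → Fin K → ℝ := fun i j =>
      ((N.choose m : ℝ) - ((N - n i).choose m : ℝ) - ((N - n j).choose m : ℝ)
        + ((N - n i - n j).choose m : ℝ)) / (N.choose m : ℝ)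
    let C : Matrix (Fin p) (Fin r) ℝ := ∑ k, α k • P k
    let Cm : Finset (Fin N) → Matrix (Fin p) (Fin r) ℝ :=
      fun s => ∑ k : Fin K, if ∃ w ∈ s, g w = k then α k • P k else 0
    let f : ℝ → ℝ := fun β =>
      (N.choose m : ℝ)⁻¹ *
        ∑ s ∈ Finset.powersetCard m (Finset.univ : Finset (Fin N)),
          inner (C - β • Cm s) (C - β • Cm s)
    let num : ℝ := (∑ i, Mt i * γ i)
      + ∑ i : Fin K, ∑ j : Fin K, if i < j then Mtt i j * (γ i + γ j) else 0
    let denom : ℝ := (∑ i, Mt i * γ i)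
      + 2 * ∑ i : Fin K, ∑ j : Fin K, if i < j then Mtt i j * γ2 i j else 0
    0 < denom → ∀ β : ℝ, f (num / denom) ≤ f β := by
  intro inner Mt Mtt γ γ2 C Cm f num denom hd β
  set t := Finset.powersetCard m (Finset.univ : Finset (Fin N)) with ht_def
  have ht_card : t.card = N.choose m := by
    rw [ht_def, Finset.card_powersetCard, Finset.card_univ, Fintype.card_fin]
  have hbinom : (0:ℝ) < (N.choose m : ℝ) := by exact_mod_cast Nat.choose_pos hmN
  -- ## Counting
  have havoid1 : ∀ k, (t.filter (fun s => ¬ ∃ w ∈ s, g w = k)).card = (N - n k).choose m := by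
    intro k
    have h1 := avoid_card (N := N) m (Finset.univ.filter (fun w => g w = k))
    rw [hcard k] at h1
    rw [← h1]
    congr 1
    apply Finset.filter_congr
    intro s _
    simp only [not_exists, Finset.mem_filter, Finset.mem_univ, true_and, eq_iff_iff]
    tauto
  have havoid2 : ∀ i j, i ≠ j →
      (t.filter (fun s => (¬ ∃ w ∈ s, g w = i) ∧ ¬ ∃ w ∈ s, g w = j)).card
        = (N - n i - n j).choose m := by
    intro i j hij
    have hdisj : Disjoint (Finset.univ.filter (fun w => g w = i))
        (Finset.univ.filter (fun w => g w = j)) := by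
      rw [Finset.disjoint_left]
      intro a ha hb
      simp only [Finset.mem_filter] at ha hb
      exact hij (ha.2 ▸ hb.2 ▸ rfl)
    have h1 := avoid_card (N := N) m
      ((Finset.univ.filter (fun w => g w = i)) ∪ (Finset.univ.filter (fun w => g w = j)))
    rw [Finset.card_union_of_disjoint hdisj, hcard i, hcard j] at h1
    rw [Nat.sub_sub, ← h1]
    congr 1
    apply Finset.filter_congr
    intro s _
    simp only [not_exists, Finset.mem_union, Finset.mem_filter, Finset.mem_univ, true_and,
      eq_iff_iff, not_or]
    exact ⟨fun h w hw => ⟨fun e => h.1 w ⟨hw, e⟩, fun e => h.2 w ⟨hw, e⟩⟩,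
      fun h => ⟨fun x hx => (h x hx.1).1 hx.2, fun x hx => (h x hx.1).2 hx.2⟩⟩
  have e0 : ∀ k, (t.filter (fun s => ∃ w ∈ s, g w = k)).card
      + (t.filter (fun s => ¬ ∃ w ∈ s, g w = k)).card = N.choose m := by
    intro k
    rw [Finset.card_filter_add_card_filter_not, ht_card]
  have hA : ∀ k, ((t.filter (fun s => ∃ w ∈ s, g w = k)).card : ℝ)
      = (N.choose m : ℝ) - ((N - n k).choose m : ℝ) := by
    intro k
    have h := e0 k
    rw [havoid1 k] at h
    have h2 : ((t.filter (fun s => ∃ w ∈ s, g w = k)).card : ℝ)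
        + ((N - n k).choose m : ℝ) = (N.choose m : ℝ) := by exact_mod_cast h
    linarith
  have hAB : ∀ i j, i ≠ j →
      ((t.filter (fun s => (∃ w ∈ s, g w = i) ∧ ∃ w ∈ s, g w = j)).card : ℝ)
      = (N.choose m : ℝ) - ((N - n i).choose m : ℝ) - ((N - n j).choose m : ℝ)
        + ((N - n i - n j).choose m : ℝ) := by
    intro i j hij
    have e1 : (t.filter (fun s => (∃ w ∈ s, g w = i) ∧ ∃ w ∈ s, g w = j)).card
        + (t.filter (fun s => (∃ w ∈ s, g w = i) ∧ ¬ ∃ w ∈ s, g w = j)).card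
        = (t.filter (fun s => ∃ w ∈ s, g w = i)).card := by
      have h := Finset.card_filter_add_card_filter_not
        (s := t.filter (fun s => ∃ w ∈ s, g w = i)) (p := fun s => ∃ w ∈ s, g w = j)
      rwa [Finset.filter_filter, Finset.filter_filter] at h
    have e2 : (t.filter (fun s => (¬ ∃ w ∈ s, g w = j) ∧ ∃ w ∈ s, g w = i)).card
        + (t.filter (fun s => (¬ ∃ w ∈ s, g w = j) ∧ ¬ ∃ w ∈ s, g w = i)).card
        = (t.filter (fun s => ¬ ∃ w ∈ s, g w = j)).card := by
      have h := Finset.card_filter_add_card_filter_not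
        (s := t.filter (fun s => ¬ ∃ w ∈ s, g w = j)) (p := fun s => ∃ w ∈ s, g w = i)
      rwa [Finset.filter_filter, Finset.filter_filter] at h
    have e3 : (t.filter (fun s => (∃ w ∈ s, g w = i) ∧ ¬ ∃ w ∈ s, g w = j))
        = t.filter (fun s => (¬ ∃ w ∈ s, g w = j) ∧ ∃ w ∈ s, g w = i) := by
      apply Finset.filter_congr
      intro s _
      exact and_comm
    have e4 : (t.filter (fun s => (¬ ∃ w ∈ s, g w = j) ∧ ¬ ∃ w ∈ s, g w = i)).card
        = (N - n i - n j).choose m := by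
      have h := havoid2 j i hij.symm
      have hnn : N - n j - n i = N - n i - n j := by omega
      rw [← hnn, ← h]
    have e5 := havoid1 j
    have c1 : ((t.filter (fun s => (∃ w ∈ s, g w = i) ∧ ∃ w ∈ s, g w = j)).card : ℝ)
        + ((t.filter (fun s => (∃ w ∈ s, g w = i) ∧ ¬ ∃ w ∈ s, g w = j)).card : ℝ)
        = ((t.filter (fun s => ∃ w ∈ s, g w = i)).card : ℝ) := by exact_mod_cast e1
    have c2 : ((t.filter (fun s => (¬ ∃ w ∈ s, g w = j) ∧ ∃ w ∈ s, g w = i)).card : ℝ)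
        + ((t.filter (fun s => (¬ ∃ w ∈ s, g w = j) ∧ ¬ ∃ w ∈ s, g w = i)).card : ℝ)
        = ((t.filter (fun s => ¬ ∃ w ∈ s, g w = j)).card : ℝ) := by exact_mod_cast e2
    rw [e3] at c1
    rw [e4, e5] at c2
    rw [hA i] at c1
    have c3 : (((N - n j).choose m : ℕ) : ℝ) = ((N - n j).choose m : ℝ) := rfl
    linarith
  -- ## Inner-product algebra
  have hinner : ∀ X Y, inner X Y = ∑ a, ∑ b, X a b * Y a b := fun _ _ => rfl
  have inner_smul : ∀ (c d : ℝ) (X Y : Matrix (Fin p) (Fin r) ℝ),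
      inner (c • X) (d • Y) = c * d * inner X Y := by
    intro c d X Y
    simp only [hinner, Matrix.smul_apply, smul_eq_mul, Finset.mul_sum]
    exact Finset.sum_congr rfl fun a _ => Finset.sum_congr rfl fun b _ => by ring
  have inner_zero_r : ∀ X, inner X (0 : Matrix (Fin p) (Fin r) ℝ) = 0 := by
    intro X; simp [hinner]
  have inner_zero_l : ∀ X, inner (0 : Matrix (Fin p) (Fin r) ℝ) X = 0 := by
    intro X; simp [hinner]
  have inner_comm : ∀ X Y, inner X Y = inner Y X := by
    intro X Y
    simp only [hinner]
    exact Finset.sum_congr rfl fun a _ => Finset.sum_congr rfl fun b _ => mul_comm _ _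
  have inner_sumsum : ∀ (F G : Fin K → Matrix (Fin p) (Fin r) ℝ),
      inner (∑ i, F i) (∑ j, G j) = ∑ i, ∑ j, inner (F i) (G j) := by
    intro F G
    simp only [hinner, Matrix.sum_apply, Finset.sum_mul_sum]
    exact swap4 _ _ _ _ _
  have hMt : ∀ i, Mt i = Mtt i i := by
    intro i
    simp only [Mt, Mtt]
    ring
  have hMsymm : ∀ i j, Mtt j i = Mtt i j := by
    intro i j
    simp only [Mtt]
    rw [inner_comm]
    ring
  have hγ : ∀ i, (N.choose m : ℝ) * γ i = (N.choose m : ℝ) - ((N - n i).choose m : ℝ) := by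
    intro i
    simp only [γ]
    field_simp
  have hγ2 : ∀ i j, (N.choose m : ℝ) * γ2 i j
      = (N.choose m : ℝ) - ((N - n i).choose m : ℝ) - ((N - n j).choose m : ℝ)
        + ((N - n i - n j).choose m : ℝ) := by
    intro i j
    simp only [γ2]
    field_simp
  -- ## Expectation of cross and quadratic terms
  have hCCm : ∀ s, inner C (Cm s)
      = ∑ i, ∑ j, (if ∃ w ∈ s, g w = j then Mtt i j else 0) := by
    intro s
    simp only [C, Cm]
    rw [inner_sumsum]
    refine Finset.sum_congr rfl fun i _ => Finset.sum_congr rfl fun j _ => ?_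
    split
    · rw [inner_smul]
    · exact inner_zero_r _
  have hCmCm : ∀ s, inner (Cm s) (Cm s)
      = ∑ i, ∑ j, (if (∃ w ∈ s, g w = i) ∧ (∃ w ∈ s, g w = j) then Mtt i j else 0) := by
    intro s
    simp only [Cm]
    rw [inner_sumsum]
    refine Finset.sum_congr rfl fun i _ => Finset.sum_congr rfl fun j _ => ?_
    by_cases hi : ∃ w ∈ s, g w = i
    · by_cases hj : ∃ w ∈ s, g w = j
      · rw [if_pos hi, if_pos hj, if_pos ⟨hi, hj⟩, inner_smul]
      · rw [if_pos hi, if_neg hj, if_neg (fun h : (∃ w ∈ s, g w = i) ∧ (∃ w ∈ s, g w = j) => hj h.2)]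
        exact inner_zero_r _
    · by_cases hj : ∃ w ∈ s, g w = j
      · rw [if_neg hi, if_pos hj, if_neg (fun h : (∃ w ∈ s, g w = i) ∧ (∃ w ∈ s, g w = j) => hi h.1)]
        exact inner_zero_l _
      · rw [if_neg hi, if_neg hj, if_neg (fun h : (∃ w ∈ s, g w = i) ∧ (∃ w ∈ s, g w = j) => hi h.1)]
        exact inner_zero_l _
  have hBsum : ∑ s ∈ t, inner C (Cm s) = (N.choose m : ℝ) * num := by
    calc ∑ s ∈ t, inner C (Cm s)
        = ∑ s ∈ t, ∑ i, ∑ j, (if ∃ w ∈ s, g w = j then Mtt i j else 0) :=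
          Finset.sum_congr rfl fun s _ => hCCm s
      _ = ∑ i, ∑ j, ∑ s ∈ t, (if ∃ w ∈ s, g w = j then Mtt i j else 0) := swap3 _ _ _ _
      _ = ∑ i, ∑ j, ((t.filter (fun s => ∃ w ∈ s, g w = j)).card : ℝ) * Mtt i j := by
          refine Finset.sum_congr rfl fun i _ => Finset.sum_congr rfl fun j _ => ?_
          rw [← Finset.sum_filter, Finset.sum_const, nsmul_eq_mul]
      _ = (N.choose m : ℝ) * num := ?_
    rw [hsplit (fun i j => ((t.filter (fun s => ∃ w ∈ s, g w = j)).card : ℝ) * Mtt i j)]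
    simp only [num]
    rw [mul_add, Finset.mul_sum]
    congr 1
    · refine Finset.sum_congr rfl fun i _ => ?_
      rw [hA i, hMt i, ← hγ i]
      ring
    · rw [Finset.mul_sum]
      refine Finset.sum_congr rfl fun i _ => ?_
      rw [Finset.mul_sum]
      refine Finset.sum_congr rfl fun j _ => ?_
      rw [mul_ite, mul_zero]
      split
      · rw [hA i, hA j, hMsymm i j, ← hγ i, ← hγ j]
        ring
      · rfl
  have hDsum : ∑ s ∈ t, inner (Cm s) (Cm s) = (N.choose m : ℝ) * denom := by
    calc ∑ s ∈ t, inner (Cm s) (Cm s)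
        = ∑ s ∈ t, ∑ i, ∑ j,
            (if (∃ w ∈ s, g w = i) ∧ (∃ w ∈ s, g w = j) then Mtt i j else 0) :=
          Finset.sum_congr rfl fun s _ => hCmCm s
      _ = ∑ i, ∑ j, ∑ s ∈ t,
            (if (∃ w ∈ s, g w = i) ∧ (∃ w ∈ s, g w = j) then Mtt i j else 0) := swap3 _ _ _ _
      _ = ∑ i, ∑ j, ((t.filter
            (fun s => (∃ w ∈ s, g w = i) ∧ ∃ w ∈ s, g w = j)).card : ℝ) * Mtt i j := by
          refine Finset.sum_congr rfl fun i _ => Finset.sum_congr rfl fun j _ => ?_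
          rw [← Finset.sum_filter, Finset.sum_const, nsmul_eq_mul]
      _ = (N.choose m : ℝ) * denom := ?_
    rw [hsplit (fun i j => ((t.filter
      (fun s => (∃ w ∈ s, g w = i) ∧ ∃ w ∈ s, g w = j)).card : ℝ) * Mtt i j)]
    simp only [denom]
    rw [mul_add, Finset.mul_sum]
    congr 1
    · refine Finset.sum_congr rfl fun i _ => ?_
      have hself : (t.filter (fun s => (∃ w ∈ s, g w = i) ∧ ∃ w ∈ s, g w = i))
          = t.filter (fun s => ∃ w ∈ s, g w = i) := by
        apply Finset.filter_congr
        intro s _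
        exact and_self_iff
      rw [hself, hA i, hMt i, ← hγ i]
      ring
    · have h2 : (N.choose m : ℝ) * (2 * ∑ i : Fin K, ∑ j : Fin K,
          (if i < j then Mtt i j * γ2 i j else 0))
          = ∑ i : Fin K, ∑ j : Fin K,
            (if i < j then (2 * (N.choose m : ℝ)) * (Mtt i j * γ2 i j) else 0) := by
        rw [← mul_assoc, mul_comm ((N.choose m : ℝ)) 2, Finset.mul_sum]
        refine Finset.sum_congr rfl fun i _ => ?_
        rw [Finset.mul_sum]
        refine Finset.sum_congr rfl fun j _ => ?_
        rw [mul_ite, mul_zero]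
      rw [h2]
      refine Finset.sum_congr rfl fun i _ => Finset.sum_congr rfl fun j _ => ?_
      split
      · rename_i hij
        have hij' : i ≠ j := ne_of_lt hij
        have hnn : N - n j - n i = N - n i - n j := by omega
        have hABji := hAB j i hij'.symm
        rw [hnn] at hABji
        rw [hAB i j hij', hABji, hMsymm i j]
        have e : (2:ℝ) * (N.choose m : ℝ) * (Mtt i j * γ2 i j)
            = 2 * Mtt i j * ((N.choose m : ℝ) * γ2 i j) := by ring
        rw [e, hγ2 i j]
        ring
      · rfl
  -- ## Quadratic form of f
  have hf : ∀ b : ℝ, f b = inner C C - 2 * num * b + denom * b ^ 2 := by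
    intro b
    have hterm : ∀ s, inner (C - b • Cm s) (C - b • Cm s)
        = inner C C - 2 * b * (inner C (Cm s)) + b ^ 2 * (inner (Cm s) (Cm s)) := by
      intro s
      simp only [hinner, Matrix.sub_apply, Matrix.smul_apply, smul_eq_mul, Finset.mul_sum,
        ← Finset.sum_add_distrib, ← Finset.sum_sub_distrib]
      exact Finset.sum_congr rfl fun a _ => Finset.sum_congr rfl fun c _ => by ring
    simp only [f, hterm]
    rw [← ht_def]
    rw [Finset.sum_add_distrib, Finset.sum_sub_distrib, Finset.sum_const, nsmul_eq_mul,
      ← Finset.mul_sum, ← Finset.mul_sum, hBsum, hDsum, ht_card]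
    field_simp
  rw [hf β, hf (num / denom)]
  have hd0 : denom ≠ 0 := ne_of_gt hd
  have key2 : 0 ≤ denom * β ^ 2 - 2 * num * β + num ^ 2 / denom := by
    have h : denom * β ^ 2 - 2 * num * β + num ^ 2 / denom
        = denom * (β - num / denom) ^ 2 := by
      field_simp
      ring
    rw [h]
    positivity
  have hL : inner C C - 2 * num * (num / denom) + denom * (num / denom) ^ 2
      = inner C C - num ^ 2 / denom := by
    field_simp
    ring
  rw [hL]
  linarith [key2]
end

section
/- For matrix-valued polynomials $\hat A(x) = \sum_{k=1}^K A_k x^{k-1}$ and $\hat B(x) = \sum_{k=0}^{K-1} B_{K-k} x^k$ (the MatDot encoding polynomials), the coefficient of $x^{K-1}$ in the product polynomial $\hat A(x)\hat B(x)$ equals $\sum_{k=1}^K A_k B_k$. -/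
open Finset Polynomial

/-- MatDot codes: for `Â(x) = ∑_{k=1}^K A_k x^{k-1}` and
`B̂(x) = ∑_{k=0}^{K-1} B_{K-k} x^k`, the coefficient of `x^{K-1}` in the
matrix-valued product polynomial `Â(x)B̂(x)` equals `∑_{k=1}^K A_k B_k`.
(The coefficients `c` are characterized by the product identity holding for
all real `x`.) -/
theorem stmt13 (K p q r : ℕ) (hK : 1 ≤ K)
    (A : Fin K → Matrix (Fin p) (Fin q) ℝ) (B : Fin K → Matrix (Fin q) (Fin r) ℝ)
    (c : ℕ → Matrix (Fin p) (Fin r) ℝ)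
    (hc : ∀ x : ℝ,
      (∑ k : Fin K, x ^ (k : ℕ) • A k) * (∑ k : Fin K, x ^ (k : ℕ) • B (Fin.rev k))
        = ∑ d ∈ Finset.range (2 * K - 1), x ^ d • c d) :
    c (K - 1) = ∑ k : Fin K, A k * B k := by
  ext i j
  set P : Polynomial ℝ := ∑ d ∈ Finset.range (2*K-1), C (c d i j) * X ^ d with hP
  set Q : Polynomial ℝ := ∑ k : Fin K, ∑ l : Fin K,
      C ((A k * B (Fin.rev l)) i j) * X ^ ((k:ℕ) + (l:ℕ)) with hQ
  have hPQ : Q = P := by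
    apply Polynomial.funext
    intro x
    have h := congrFun (congrFun (hc x) i) j
    simp only [Matrix.mul_apply, Matrix.sum_apply, Matrix.smul_apply, smul_eq_mul] at h
    simp only [hP, hQ, Polynomial.eval_finset_sum, eval_mul, eval_pow, eval_C, eval_X,
      Matrix.mul_apply, Finset.sum_mul, Finset.mul_sum] at *
    have hr : ∑ d ∈ range (2*K-1), c d i j * x ^ d = ∑ d ∈ range (2*K-1), x ^ d * c d i j :=
      Finset.sum_congr rfl fun d _ => mul_comm _ _
    rw [hr, ← h]
    conv_rhs => rw [Finset.sum_comm]; enter [2, l]; rw [Finset.sum_comm]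
    rw [Finset.sum_comm]
    exact Finset.sum_congr rfl fun k _ => Finset.sum_congr rfl fun l _ =>
      Finset.sum_congr rfl fun m _ => by rw [pow_add]; ring
  have hcoeff := congrArg (fun f => Polynomial.coeff f (K-1)) hPQ
  simp only [hP, hQ, Polynomial.finset_sum_coeff, Polynomial.coeff_C_mul,
    Polynomial.coeff_X_pow] at hcoeff
  have hR : (∑ d ∈ Finset.range (2*K-1), c d i j * if K - 1 = d then 1 else 0)
      = c (K-1) i j := by
    rw [Finset.sum_eq_single (K-1)]
    · simp
    · intro b _ hb; simp [Ne.symm hb, (show ¬ (K-1 = b) from fun hh => hb hh.symm)]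
    · intro hb; exact absurd (Finset.mem_range.mpr (by omega)) hb
  have hL : (∑ k : Fin K, ∑ l : Fin K,
        (A k * B (Fin.rev l)) i j * if K - 1 = (k:ℕ) + (l:ℕ) then 1 else 0)
      = ∑ k : Fin K, (A k * B k) i j := by
    refine Finset.sum_congr rfl fun k _ => ?_
    have hk := k.isLt
    rw [Finset.sum_eq_single (⟨K-1-(k:ℕ), by omega⟩ : Fin K)]
    · have hrev : Fin.rev (⟨K-1-(k:ℕ), by omega⟩ : Fin K) = k := by
        ext; simp [Fin.rev]; omega
      rw [hrev]
      have : K - 1 = (k:ℕ) + (K-1-(k:ℕ)) := by omega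
      simp [← this]
    · intro b _ hb
      have : ¬ (K - 1 = (k:ℕ) + (b:ℕ)) := by
        intro hh; apply hb; ext; simp; omega
      simp [this]
    · intro hb; exact absurd (Finset.mem_univ _) hb
  rw [Matrix.sum_apply, ← hR, ← hcoeff, hL]
end

section
/- A matrix-valued polynomial of degree at most $2K-2$ is uniquely determined by its evaluations at any $2K-1$ distinct real points; consequently, if $\hat A(x)\hat B(x)$ has degree at most $2K-2$ and its values are known at $2K-1$ distinct points, then every coefficient, in particular the coefficient of $x^{K-1}$ which equals $AB$, can be recovered (i.e., the recovery threshold of MatDot codes is $2K-1$). -/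
open Finset

open Polynomial in
lemma aux_zero {m : ℕ} (f : Fin m → ℝ) (xs : Fin m → ℝ) (hxs : Function.Injective xs)
    (h : ∀ t, ∑ d : Fin m, xs t ^ (d : ℕ) * f d = 0) : ∀ d, f d = 0 := by
  intro d
  set P : Polynomial ℝ := ∑ e : Fin m, Polynomial.C (f e) * Polynomial.X ^ (e : ℕ) with hP
  have hdeg : P.natDegree < m := by
    have := Polynomial.natDegree_sum_le_of_forall_le Finset.univ
      (fun e : Fin m => Polynomial.C (f e) * Polynomial.X ^ (e : ℕ))
      (n := m - 1) (fun e _ => (Polynomial.natDegree_C_mul_X_pow_le (f e) e).trans (by omega))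
    have hm : 0 < m := d.pos
    exact lt_of_le_of_lt (hP ▸ this) (by omega)
  have hPz : P = 0 := by
    apply Polynomial.eq_zero_of_natDegree_lt_card_of_eval_eq_zero P hxs _ (by simpa using hdeg)
    intro t
    rw [hP]
    simp only [Polynomial.eval_finset_sum, Polynomial.eval_mul, Polynomial.eval_C,
      Polynomial.eval_pow, Polynomial.eval_X]
    rw [← h t]
    exact Finset.sum_congr rfl fun e _ => mul_comm _ _
  have := congrArg (fun Q => Polynomial.coeff Q (d : ℕ)) hPz
  simpa [hP, Polynomial.finset_sum_coeff, Polynomial.coeff_C_mul, Polynomial.coeff_X_pow,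
    Fin.val_eq_val] using this


/-- A matrix-valued polynomial of degree at most `2K-2` is uniquely determined
by its evaluations at `2K-1` distinct real points; consequently, if the MatDot
decoding polynomial `Â(x)B̂(x)` is known at `2K-1` distinct points and `c` is
its coefficient family, then every coefficient is determined and in
particular `c_{K-1} = ∑_k A_k B_k = AB` (recovery threshold `2K-1`). -/
theorem stmt14 (K p q r : ℕ) (hK : 1 ≤ K)
    (A : Fin K → Matrix (Fin p) (Fin q) ℝ) (B : Fin K → Matrix (Fin q) (Fin r) ℝ)
    (xs : Fin (2 * K - 1) → ℝ) (hxs : Function.Injective xs)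
    (c : Fin (2 * K - 1) → Matrix (Fin p) (Fin r) ℝ)
    (hc : ∀ npt : Fin (2 * K - 1),
      (∑ k : Fin K, (xs npt) ^ (k : ℕ) • A k)
          * (∑ k : Fin K, (xs npt) ^ (k : ℕ) • B (Fin.rev k))
        = ∑ d : Fin (2 * K - 1), (xs npt) ^ (d : ℕ) • c d) :
    (∀ c' : Fin (2 * K - 1) → Matrix (Fin p) (Fin r) ℝ,
      (∀ npt : Fin (2 * K - 1),
        (∑ d : Fin (2 * K - 1), (xs npt) ^ (d : ℕ) • c' d)
          = ∑ d : Fin (2 * K - 1), (xs npt) ^ (d : ℕ) • c d) → c' = c) ∧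
    c ⟨K - 1, by omega⟩ = ∑ k : Fin K, A k * B k := by
  have uniq : ∀ c' : Fin (2 * K - 1) → Matrix (Fin p) (Fin r) ℝ,
      (∀ npt : Fin (2 * K - 1),
        (∑ d : Fin (2 * K - 1), (xs npt) ^ (d : ℕ) • c' d)
          = ∑ d : Fin (2 * K - 1), (xs npt) ^ (d : ℕ) • c d) → c' = c := by
    intro c' h
    funext d
    ext i j
    have key := aux_zero (fun e => c' e i j - c e i j) xs hxs ?_ d
    · exact sub_eq_zero.mp key
    · intro t
      have ht : (∑ e : Fin (2 * K - 1), xs t ^ (e : ℕ) • c' e) i j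
          = (∑ e : Fin (2 * K - 1), xs t ^ (e : ℕ) • c e) i j := by rw [h t]
      simp only [Matrix.sum_apply, Matrix.smul_apply, smul_eq_mul] at ht
      simp [mul_sub, Finset.sum_sub_distrib, ht]
  refine ⟨uniq, ?_⟩
  classical
  set g : Fin K × Fin K → Fin (2 * K - 1) :=
    fun kl => ⟨(kl.1 : ℕ) + (kl.2 : ℕ), by omega⟩ with hg
  set c₀ : Fin (2 * K - 1) → Matrix (Fin p) (Fin r) ℝ :=
    fun d => ∑ kl ∈ Finset.univ.filter (fun kl : Fin K × Fin K => g kl = d),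
      A kl.1 * B (Fin.rev kl.2) with hc₀
  have hexp : ∀ npt : Fin (2 * K - 1),
      (∑ k : Fin K, (xs npt) ^ (k : ℕ) • A k)
          * (∑ k : Fin K, (xs npt) ^ (k : ℕ) • B (Fin.rev k))
        = ∑ d : Fin (2 * K - 1), (xs npt) ^ (d : ℕ) • c₀ d := by
    intro t
    rw [Matrix.sum_mul]
    simp_rw [Matrix.mul_sum]
    have : ∀ d : Fin (2 * K - 1), (xs t) ^ (d : ℕ) • c₀ d
        = ∑ kl ∈ Finset.univ.filter (fun kl : Fin K × Fin K => g kl = d),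
            ((xs t) ^ (kl.1 : ℕ) • A kl.1) * ((xs t) ^ (kl.2 : ℕ) • B (Fin.rev kl.2)) := by
      intro d
      rw [hc₀, Finset.smul_sum]
      refine Finset.sum_congr rfl fun kl hkl => ?_
      have hval : (kl.1 : ℕ) + (kl.2 : ℕ) = (d : ℕ) := by
        have := (Finset.mem_filter.mp hkl).2
        rw [hg] at this
        exact congrArg Fin.val this
      rw [Matrix.smul_mul, Matrix.mul_smul, smul_smul, ← pow_add, hval]
    rw [Finset.sum_congr rfl fun d _ => this d,
      Finset.sum_fiberwise Finset.univ g
        (fun kl => ((xs t) ^ (kl.1 : ℕ) • A kl.1) * ((xs t) ^ (kl.2 : ℕ) • B (Fin.rev kl.2))),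
      Fintype.sum_prod_type]
  have hc0c : c₀ = c := uniq c₀ (fun t => by rw [← hexp t, hc t])
  rw [← hc0c, hc₀]
  refine Finset.sum_bij' (fun kl _ => kl.1) (fun k _ => (k, Fin.rev k)) ?_ ?_ ?_ ?_ ?_
  · intro kl _; exact Finset.mem_univ _
  · intro k _
    simp only [Finset.mem_filter, Finset.mem_univ, true_and, hg]
    ext
    simp [Fin.val_rev]
    omega
  · intro kl hkl
    have hval : (kl.1 : ℕ) + (kl.2 : ℕ) = K - 1 := by
      have := (Finset.mem_filter.mp hkl).2
      rw [hg] at this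
      exact congrArg Fin.val this
    ext <;> simp [Fin.val_rev] <;> omega
  · intro k _; rfl
  · intro kl hkl
    have hval : (kl.1 : ℕ) + (kl.2 : ℕ) = K - 1 := by
      have := (Finset.mem_filter.mp hkl).2
      rw [hg] at this
      exact congrArg Fin.val this
    have : Fin.rev kl.2 = kl.1 := by
      ext
      simp [Fin.val_rev]
      omega
    rw [this]
end
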